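/- Let U ~ Gamma(N_R,1) and V ~ Gamma(N_T,1) be independent with N_T ≥ N_R, and X = UV. Then for s < 0, the moment generating function E[e^{(γ/N_T) s X}] equals (−N_T/(γ s))^{N_T} Ψ(N_T, |N_T−N_R|+1; −N_T/(γ s)), where Ψ(α, γ; z) is Tricomi's confluent hypergeometric function. -/

import Mathlib

/-! Integrating out `U ~ Γ(N_R, 1)` first, its moment generating function turns
`E[exp(c U V)]` (with `c = γ s / N_T < 0`) into `E[(1 + V / z)^(-N_R)]` for `z = -1 / c`.
Substituting `V = z t` in the `Γ(N_T, 1)` integral gives `z^N_T / Γ(N_T)` times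
`∫₀^∞ e^(-z t) t^(N_T - 1) (1 + t)^(-N_R) dt`, Tricomi's integral with `b - a - 1 = -N_R`,
i.e. `b = N_T - N_R + 1`. -/

open Real Set Filter MeasureTheory ProbabilityTheory

/-- Tricomi's confluent hypergeometric function `Ψ(a, b; z)` (also written `U(a,b,z)`), via its
standard integral representation, valid for `a > 0` and `z > 0`. -/
noncomputable def tricomiU (a b z : ℝ) : ℝ :=
  (1 / Real.Gamma a) *
    ∫ t in Ioi (0 : ℝ), Real.exp (-z * t) * t ^ (a - 1) * (1 + t) ^ (b - a - 1)

namespace ProbabilityTheory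

lemma measurable_gammaPDF (a r : ℝ) : Measurable (gammaPDF a r) :=
  (measurable_gammaPDFReal a r).ennreal_ofReal

lemma ae_pos_gammaMeasure (a r : ℝ) : ∀ᵐ x ∂gammaMeasure a r, 0 < x := by
  rw [gammaMeasure, ae_withDensity_iff (measurable_gammaPDF a r)]
  filter_upwards [volume.ae_ne 0] with x hx hpdf
  exact hx.lt_or_gt.resolve_left fun hneg => hpdf (gammaPDF_of_neg hneg)

lemma integral_gammaMeasure {a r : ℝ} (ha : 0 < a) (hr : 0 < r) (g : ℝ → ℝ) :
    ∫ x, g x ∂gammaMeasure a r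
      = r ^ a / Gamma a * ∫ x in Ioi 0, x ^ (a - 1) * exp (-(r * x)) * g x := by
  have hpdf : ∀ x, (gammaPDF a r x).toReal = gammaPDFReal a r x := fun x =>
    ENNReal.toReal_ofReal (gammaPDFReal_nonneg ha hr x)
  rw [gammaMeasure, integral_withDensity_eq_integral_toReal_smul (measurable_gammaPDF a r)
      (ae_of_all _ fun _ => ENNReal.ofReal_lt_top), ← integral_const_mul,
    ← integral_Ici_eq_integral_Ioi, ← integral_indicator measurableSet_Ici]
  congr 1 with x
  by_cases hx : 0 ≤ x
  · simp [hpdf, gammaPDFReal, hx, mul_assoc]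
  · simp [hpdf, gammaPDFReal, hx]

lemma integral_exp_mul_gammaMeasure {a r t : ℝ} (ha : 0 < a) (hr : 0 < r) (ht : t < r) :
    ∫ x, exp (t * x) ∂gammaMeasure a r = (1 - t / r) ^ (-a) := by
  have hrt : 0 < r - t := sub_pos.mpr ht
  have hexp : ∀ x, x ^ (a - 1) * exp (-(r * x)) * exp (t * x)
      = x ^ (a - 1) * exp (-((r - t) * x)) := fun x => by
    rw [mul_assoc, ← exp_add]; ring_nf
  simp_rw [integral_gammaMeasure ha hr, hexp, integral_rpow_mul_exp_neg_mul_Ioi ha hrt]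
  have hG : Gamma a ≠ 0 := (Gamma_pos_of_pos ha).ne'
  rw [show 1 - t / r = (r / (r - t))⁻¹ by field_simp, inv_rpow (by positivity), rpow_neg
    (by positivity), inv_inv, div_rpow hr.le hrt.le, one_div, inv_rpow hrt.le]
  field_simp

lemma integral_exp_mul_mul_gammaMeasure_prod {a b r₁ r₂ c : ℝ} (ha : 0 < a) (hb : 0 < b)
    (hr₁ : 0 < r₁) (hr₂ : 0 < r₂) (hc : c ≤ 0) :
    ∫ p, exp (c * (p.1 * p.2)) ∂(gammaMeasure a r₁).prod (gammaMeasure b r₂)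
      = ∫ v, (1 - c * v / r₁) ^ (-a) ∂gammaMeasure b r₂ := by
  have := isProbabilityMeasure_gammaMeasure ha hr₁
  have := isProbabilityMeasure_gammaMeasure hb hr₂
  have hpos : ∀ᵐ p ∂(gammaMeasure a r₁).prod (gammaMeasure b r₂), 0 < p.1 ∧ 0 < p.2 :=
    (Measure.ae_prod_iff_ae_ae (measurableSet_lt measurable_const measurable_fst |>.inter
      (measurableSet_lt measurable_const measurable_snd))).2 <|
      (ae_pos_gammaMeasure a r₁).mono fun u hu =>
        (ae_pos_gammaMeasure b r₂).mono fun v hv => ⟨hu, hv⟩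
  have hint : Integrable (fun p : ℝ × ℝ => exp (c * (p.1 * p.2)))
      ((gammaMeasure a r₁).prod (gammaMeasure b r₂)) := by
    refine .of_bound (by fun_prop) 1 (hpos.mono fun p hp => ?_)
    rw [norm_of_nonneg (exp_nonneg _), exp_le_one_iff]
    exact mul_nonpos_of_nonpos_of_nonneg hc (mul_pos hp.1 hp.2).le
  rw [integral_prod_symm _ hint]
  refine integral_congr_ae ((ae_pos_gammaMeasure b r₂).mono fun v hv => ?_)
  have hcomm : ∀ u, c * (u * v) = c * v * u := fun u => by ring
  simp_rw [hcomm]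
  exact integral_exp_mul_gammaMeasure ha hr₁ <|
    (mul_nonpos_of_nonpos_of_nonneg hc hv.le).trans_lt hr₁

lemma integral_one_add_div_rpow_neg_gammaMeasure {a r z : ℝ} (ha : 0 < a) (hr : 0 < r)
    (hz : 0 < z) (b : ℝ) :
    ∫ v, (1 + v / z) ^ (-b) ∂gammaMeasure a r = (r * z) ^ a * tricomiU a (a - b + 1) (r * z) := by
  have hsubst : EqOn
      (fun t => (z * t) ^ (a - 1) * exp (-(r * (z * t))) * (1 + z * t / z) ^ (-b))
      (fun t => z ^ (a - 1) * (exp (-(r * z) * t) * t ^ (a - 1) * (1 + t) ^ (a - b + 1 - a - 1)))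
      (Ioi 0) := fun t (ht : 0 < t) => by
    dsimp only
    rw [mul_rpow hz.le ht.le, mul_div_cancel_left₀ t hz.ne', show a - b + 1 - a - 1 = -b by ring]
    ring_nf
  rw [integral_gammaMeasure ha hr, ← mul_zero z, ← integral_comp_mul_left_Ioi' _ 0 hz,
    smul_eq_mul, setIntegral_congr_fun measurableSet_Ioi hsubst, integral_const_mul, tricomiU,
    mul_rpow hr.le hz.le, rpow_sub_one hz.ne']
  field_simp

end ProbabilityTheory

theorem mgf_product_gammas
    {Ω : Type*} [MeasureSpace Ω] [IsProbabilityMeasure (ℙ : Measure Ω)]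
    (N_T N_R : ℕ) (hNR : 1 ≤ N_R) (h : N_R ≤ N_T)
    (γ : ℝ) (hγ : 0 < γ) (s : ℝ) (hs : s < 0)
    (U V : Ω → ℝ) (hU : Measurable U) (hV : Measurable V)
    (hUlaw : Measure.map U ℙ = gammaMeasure N_R 1)
    (hVlaw : Measure.map V ℙ = gammaMeasure N_T 1)
    (hindep : IndepFun U V ℙ) :
    ∫ ω, Real.exp ((γ / N_T) * s * (U ω * V ω)) ∂ℙ
      = (-(N_T : ℝ) / (γ * s)) ^ (N_T : ℕ) *
          tricomiU N_T (|(N_T : ℝ) - N_R| + 1) (-(N_T : ℝ) / (γ * s)) := by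
  have hR : (0 : ℝ) < N_R := by exact_mod_cast hNR
  have hT : (0 : ℝ) < N_T := hR.trans_le (by exact_mod_cast h)
  set z := -(N_T : ℝ) / (γ * s)
  have hz : 0 < z := div_pos_of_neg_of_neg (neg_neg_of_pos hT) (mul_neg_of_pos_of_neg hγ hs)
  have hc : γ / N_T * s ≤ 0 := mul_nonpos_of_nonneg_of_nonpos (by positivity) hs.le
  have hlaw : HasLaw (fun ω => (U ω, V ω)) ((gammaMeasure N_R 1).prod (gammaMeasure N_T 1)) :=
    hindep.hasLaw_prod ⟨hU.aemeasurable, hUlaw⟩ ⟨hV.aemeasurable, hVlaw⟩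
  have hrate : ∀ v, 1 - γ / N_T * s * v / 1 = 1 + v / z := fun v => by
    simp only [z]; field_simp; ring
  calc ∫ ω, exp (γ / N_T * s * (U ω * V ω))
      = ∫ p, exp (γ / N_T * s * (p.1 * p.2)) ∂(gammaMeasure N_R 1).prod (gammaMeasure N_T 1) :=
        hlaw.integral_comp (f := fun p : ℝ × ℝ => exp (γ / N_T * s * (p.1 * p.2))) (by fun_prop)
    _ = ∫ v, (1 + v / z) ^ (-(N_R : ℝ)) ∂gammaMeasure N_T 1 := by
        simp_rw [integral_exp_mul_mul_gammaMeasure_prod hR hT one_pos one_pos hc, hrate]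
    _ = z ^ N_T * tricomiU N_T (|(N_T : ℝ) - N_R| + 1) z := by
        rw [integral_one_add_div_rpow_neg_gammaMeasure hT one_pos hz, one_mul, rpow_natCast,
          abs_of_nonneg (sub_nonneg.mpr (by exact_mod_cast h))]
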